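/- arXiv:2108.05225 — 4 statements merged into one kernel-verified Lean document; each statement's English description precedes it below -/
import Mathlib

section
/- Let Γ = (ℤ/4ℤ) × (ℤ/4ℤ) and define q : Γ → ℂˣ by q(s,t) = i^{s̃ t̃}, where s̃, t̃ ∈ {0,1,2,3} are the representatives of s and t (this is well defined since i⁴ = 1). Then the set of group automorphisms f of Γ satisfying q ∘ f = q consists of exactly the four automorphisms id, −id, κ and −κ, where κ(s,t) = (t,s) is the coordinate swap and −id is negation. In particular this automorphism group is isomorphic to ℤ/2ℤ × ℤ/2ℤ. -/
/-- The imaginary unit `i` as a unit of `ℂ`. -/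
noncomputable def iUnit : ℂˣ := Units.mk0 Complex.I Complex.I_ne_zero

/-- The quadratic form `q(s,t) = i^(s̃ t̃)` on `Γ = ℤ/4 × ℤ/4`, where `s̃, t̃ ∈ {0,1,2,3}`
are the canonical representatives of `s` and `t`. -/
noncomputable def q0 (p : ZMod 4 × ZMod 4) : ℂˣ := iUnit ^ (p.1.val * p.2.val)

/-- The group structure (composition) that `AddAut` carried in the older Mathlib. -/
instance : Group (AddAut (ZMod 4 × ZMod 4)) where
  mul g h := AddEquiv.trans h g
  one := AddEquiv.refl _
  inv := AddEquiv.symm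
  mul_assoc _ _ _ := rfl
  one_mul _ := rfl
  mul_one _ := rfl
  inv_mul_cancel := AddEquiv.self_trans_symm

/-- The group of (additive) automorphisms of `Γ = ℤ/4 × ℤ/4` preserving `q0`. -/
def qAut : Subgroup (AddAut (ZMod 4 × ZMod 4)) where
  carrier := {f | ∀ x, q0 (f x) = q0 x}
  one_mem' := fun _ => rfl
  mul_mem' := by
    intro f g hf hg x
    have h : (f * g) x = f (g x) := rfl
    rw [h, hf, hg]
  inv_mem' := by
    intro f hf x
    have h := hf (f⁻¹ x)
    rw [show f (f⁻¹ x) = x from f.apply_symm_apply x] at h; exact h.symm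

/-- The coordinate-swap automorphism `κ(s,t) = (t,s)` of `ℤ/4 × ℤ/4`. -/
def swapAut : AddAut (ZMod 4 × ZMod 4) :=
  (AddEquiv.prodComm : ZMod 4 × ZMod 4 ≃+ ZMod 4 × ZMod 4)

/-- The negation automorphism `−id` of `ℤ/4 × ℤ/4`. -/
def negAut : AddAut (ZMod 4 × ZMod 4) := AddEquiv.neg (ZMod 4 × ZMod 4)

/-!
Since `i` has order 4, `q(x) = q(y)` exactly when the products of coordinates agree in `ℤ/4`, so
the automorphisms in question are those preserving the form `Q(s,t) = s t`. An automorphism is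
determined by `a = f(1,0)` and `b = f(0,1)`, and preserving `Q` forces `Q a = Q b = 0` and
`Q (a + b) = 1`; a finite check shows the only such pairs are `(±(1,0), ±(0,1))` and
`(±(0,1), ±(1,0))`, with equal signs. The four resulting automorphisms are involutions, so they form a Klein four-group.
-/

theorem AddEquiv.ext_zmod_prod {n : ℕ} {M : Type*} [AddCommGroup M] [Module (ZMod n) M]
    {f g : ZMod n × ZMod n ≃+ M} (h₁ : f (1, 0) = g (1, 0)) (h₂ : f (0, 1) = g (0, 1)) :
    f = g := by
  refine AddEquiv.toAddMonoidHom_injective (AddMonoidHom.toZModLinearMap_injective n ?_)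
  exact LinearMap.prod_ext (LinearMap.ext_ring h₁) (LinearMap.ext_ring h₂)

theorem orderOf_iUnit : orderOf iUnit = 4 := by
  rw [← orderOf_units, iUnit, Units.val_mk0, ← Complex.isPrimitiveRoot_I.eq_orderOf]

theorem q0_eq_q0_iff (x y : ZMod 4 × ZMod 4) : q0 x = q0 y ↔ x.1 * x.2 = y.1 * y.2 := by
  rw [q0, q0, pow_eq_pow_iff_modEq, orderOf_iUnit, ← ZMod.natCast_eq_natCast_iff]
  push_cast [ZMod.natCast_val, ZMod.cast_id]
  rfl

theorem mem_qAut_iff (f : AddAut (ZMod 4 × ZMod 4)) :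
    f ∈ qAut ↔ ∀ x, (f x).1 * (f x).2 = x.1 * x.2 :=
  forall_congr' fun x => q0_eq_q0_iff (f x) x

theorem zmod4_isotropic_pair_cases : ∀ a b : ZMod 4 × ZMod 4,
    a.1 * a.2 = 0 → b.1 * b.2 = 0 → (a + b).1 * (a + b).2 = 1 →
      (a = (1, 0) ∧ b = (0, 1)) ∨ (a = (-1, 0) ∧ b = (0, -1)) ∨
      (a = (0, 1) ∧ b = (1, 0)) ∨ (a = (0, -1) ∧ b = (-1, 0)) := by
  decide

theorem eq_of_mem_qAut {f : AddAut (ZMod 4 × ZMod 4)} (hf : f ∈ qAut) :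
    f = 1 ∨ f = negAut ∨ f = swapAut ∨ f = negAut * swapAut := by
  rw [mem_qAut_iff] at hf
  have ha : (f (1, 0)).1 * (f (1, 0)).2 = 0 := hf (1, 0)
  have hb : (f (0, 1)).1 * (f (0, 1)).2 = 0 := hf (0, 1)
  have hab : (f (1, 0) + f (0, 1)).1 * (f (1, 0) + f (0, 1)).2 = 1 := by
    rw [← map_add]; exact hf (1, 1)
  rcases zmod4_isotropic_pair_cases _ _ ha hb hab with ⟨h₁, h₂⟩ | ⟨h₁, h₂⟩ | ⟨h₁, h₂⟩ | ⟨h₁, h₂⟩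
  · exact .inl (AddEquiv.ext_zmod_prod h₁ h₂)
  · exact .inr <| .inl (AddEquiv.ext_zmod_prod h₁ h₂)
  · exact .inr <| .inr <| .inl (AddEquiv.ext_zmod_prod h₁ h₂)
  · exact .inr <| .inr <| .inr (AddEquiv.ext_zmod_prod h₁ h₂)

theorem negAut_mem_qAut : negAut ∈ qAut :=
  (mem_qAut_iff _).2 fun x => neg_mul_neg x.1 x.2

theorem swapAut_mem_qAut : swapAut ∈ qAut :=
  (mem_qAut_iff _).2 fun x => mul_comm x.2 x.1

theorem coe_qAut : (qAut : Set (AddAut (ZMod 4 × ZMod 4))) =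
    {1, negAut, swapAut, negAut * swapAut} := by
  ext f
  refine ⟨eq_of_mem_qAut, ?_⟩
  rintro (rfl | rfl | rfl | rfl)
  · exact one_mem qAut
  · exact negAut_mem_qAut
  · exact swapAut_mem_qAut
  · exact mul_mem negAut_mem_qAut swapAut_mem_qAut


theorem mul_self_eq_one_of_mem_qAut {f : AddAut (ZMod 4 × ZMod 4)} (hf : f ∈ qAut) :
    f * f = 1 := by
  rcases eq_of_mem_qAut hf with rfl | rfl | rfl | rfl <;> ext x : 1 <;> decide +revert

theorem card_qAut : Nat.card qAut = 4 := by
  have hne : ∀ f g : AddAut (ZMod 4 × ZMod 4), f (1, 0) ≠ g (1, 0) → f ≠ g :=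
    fun f g h => DFunLike.ne_iff.2 ⟨_, h⟩
  rw [← SetLike.coe_sort_coe, Nat.card_coe_set_eq, coe_qAut,
    Set.ncard_insert_of_notMem, Set.ncard_insert_of_notMem, Set.ncard_pair]
  · exact hne _ _ (by decide)
  · simpa using ⟨hne _ _ (by decide), hne _ _ (by decide)⟩
  · simpa using ⟨hne _ _ (by decide), hne _ _ (by decide), hne _ _ (by decide)⟩

instance : IsKleinFour qAut where
  card_four := card_qAut
  exponent_two := by
    have : Nontrivial qAut := Finite.one_lt_card_iff_nontrivial.1 (by rw [card_qAut]; norm_num)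
    refine (Monoid.exponent_eq_prime_iff Nat.prime_two).2 fun f hf => orderOf_eq_prime ?_ hf
    exact Subtype.ext (mul_self_eq_one_of_mem_qAut f.2)

/-- The automorphisms of `Γ = ℤ/4 × ℤ/4` preserving `q(s,t) = i^{s̃t̃}` are
exactly `id`, `−id`, `κ` and `−κ`, and this group is isomorphic to `ℤ/2 × ℤ/2`. -/
theorem stmt0 :
    (qAut : Set (AddAut (ZMod 4 × ZMod 4))) = {1, negAut, swapAut, negAut * swapAut} ∧
    Nonempty (qAut ≃* Multiplicative (ZMod 2 × ZMod 2)) :=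
  ⟨coe_qAut, IsKleinFour.nonempty_mulEquiv⟩
end

section
/- Let G be an abelian group generated by two elements, and let ω : G × G × G → ℂˣ be a 3-cocycle for the trivial G-action on ℂˣ, i.e. ω(y,z,w)·ω(x, y z, w)·ω(x,y,z) = ω(x y, z, w)·ω(x, y, z w) for all x,y,z,w ∈ G. Define φ*(ω)(x,y,z) = ω(x,y,z)ω(y,z,x)ω(z,x,y) / (ω(y,x,z)ω(x,z,y)ω(z,y,x)). Then φ*(ω)(x,y,z) = 1 for all x, y, z ∈ G. -/
/-!
The antisymmetrization of a 3-cocycle on an abelian group is trilinear: multiplicativity in the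
first argument is a signed product of twelve instances of the cocycle identity, and the other two
arguments follow by its cyclic symmetry. It is also alternating, so it vanishes on any triple
drawn from the two generators (two entries coincide), and by trilinearity on all of `G`.
-/

open Subgroup

theorem MonoidHom.eq_one_of_closure_eq_top₃ {G M : Type*} [Group G] [CommMonoid M] {s : Set G}
    (hs : closure s = ⊤) {f : G →* G →* G →* M}
    (h : ∀ x ∈ s, ∀ y ∈ s, ∀ z ∈ s, f x y z = 1) (x y z : G) :
    f x y z = 1 := by
  have hf : f = 1 :=
    eq_of_eqOn_dense hs fun x hx => eq_of_eqOn_dense hs fun y hy =>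
      eq_of_eqOn_dense hs fun z hz => h x hx y hy z hz
  rw [hf, one_apply, one_apply, one_apply]

section

variable {G M : Type*} [CommGroup M]

def IsThreeCocycle [Mul G] (ω : G → G → G → M) : Prop :=
  ∀ x y z w : G, ω y z w * ω x (y * z) w * ω x y z = ω (x * y) z w * ω x y (z * w)

def antisymmetrization (ω : G → G → G → M) (x y z : G) : M :=
  ω x y z * ω y z x * ω z x y * (ω y x z)⁻¹ * (ω x z y)⁻¹ * (ω z y x)⁻¹

section Alternating

variable (ω : G → G → G → M)

theorem antisymmetrization_cyclic (x y z : G) :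
    antisymmetrization ω x y z = antisymmetrization ω y z x := by
  simp only [antisymmetrization]
  ac_rfl

theorem antisymmetrization_self_left (x z : G) : antisymmetrization ω x x z = 1 := by
  apply Additive.ofMul.injective
  simp only [antisymmetrization, ofMul_mul, ofMul_inv, ofMul_one]
  abel

theorem antisymmetrization_self_right (x y : G) : antisymmetrization ω x y y = 1 := by
  rw [antisymmetrization_cyclic, antisymmetrization_self_left]

theorem antisymmetrization_self_outer (x y : G) : antisymmetrization ω x y x = 1 := by
  rw [← antisymmetrization_cyclic, antisymmetrization_self_left]

theorem antisymmetrization_eq_one_of_mem_pair {a b x y z : G} (hx : x ∈ ({a, b} : Set G))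
    (hy : y ∈ ({a, b} : Set G)) (hz : z ∈ ({a, b} : Set G)) :
    antisymmetrization ω x y z = 1 := by
  rcases hx with rfl | rfl <;> rcases hy with rfl | rfl <;> rcases hz with rfl | rfl <;>
    simp only [antisymmetrization_self_left, antisymmetrization_self_right,
      antisymmetrization_self_outer]

end Alternating

section Trilinear

variable [CommGroup G] {ω : G → G → G → M}

-- Sum of the cocycle identity over the twelve orderings of `(x', x, y, z)` with `x'` before `x`,
-- weighted by minus the sign of the ordering.
theorem antisymmetrization_mul_left (hω : IsThreeCocycle ω) (x x' y z : G) :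
    antisymmetrization ω (x * x') y z =
      antisymmetrization ω x y z * antisymmetrization ω x' y z := by
  apply Additive.ofMul.injective
  have h := fun p q r s => congrArg Additive.ofMul (hω p q r s)
  simp only [antisymmetrization, ofMul_mul, ofMul_inv] at h ⊢
  linear_combination (norm := (simp only [mul_comm]; abel))
    h z y x' x - h z x' y x + h z x' x y - h y z x' x + h y x' z x - h y x' x z
      + h x' z y x - h x' z x y - h x' y z x + h x' y x z + h x' x z y - h x' x y z

theorem antisymmetrization_mul_mid (hω : IsThreeCocycle ω) (x y y' z : G) :
    antisymmetrization ω x (y * y') z =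
      antisymmetrization ω x y z * antisymmetrization ω x y' z := by
  simp only [antisymmetrization_cyclic ω x, antisymmetrization_mul_left hω]

theorem antisymmetrization_mul_right (hω : IsThreeCocycle ω) (x y z z' : G) :
    antisymmetrization ω x y (z * z') =
      antisymmetrization ω x y z * antisymmetrization ω x y z' := by
  simp only [← antisymmetrization_cyclic ω _ x y, antisymmetrization_mul_left hω]

def antisymmetrizationHom (hω : IsThreeCocycle ω) : G →* G →* G →* M :=
  MonoidHom.mk'
    (fun x => MonoidHom.mk'
      (fun y => MonoidHom.mk' (antisymmetrization ω x y) (antisymmetrization_mul_right hω x y))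
      fun y y' => MonoidHom.ext (antisymmetrization_mul_mid hω x y y'))
    fun x x' => MonoidHom.ext fun y => MonoidHom.ext (antisymmetrization_mul_left hω x x' y)

end Trilinear

end

/-- For an abelian group `G` generated by two elements and a 3-cocycle
`ω : G³ → ℂˣ` (trivial action), the total antisymmetrization
`φ*(ω)(x,y,z) = ω(x,y,z)ω(y,z,x)ω(z,x,y)·(ω(y,x,z)ω(x,z,y)ω(z,y,x))⁻¹` is identically `1`. -/
theorem stmt1 {G : Type*} [CommGroup G] (a b : G)
    (hgen : Subgroup.closure ({a, b} : Set G) = ⊤)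
    (ω : G → G → G → ℂˣ)
    (hcocycle : ∀ x y z w : G,
      ω y z w * ω x (y * z) w * ω x y z = ω (x * y) z w * ω x y (z * w)) :
    ∀ x y z : G,
      ω x y z * ω y z x * ω z x y * (ω y x z)⁻¹ * (ω x z y)⁻¹ * (ω z y x)⁻¹ = 1 :=
  MonoidHom.eq_one_of_closure_eq_top₃ (f := antisymmetrizationHom hcocycle) hgen
    fun _ hx _ hy _ hz => antisymmetrization_eq_one_of_mem_pair ω hx hy hz
end

section
/- Let G and Γ be finite abelian groups with |Γ| = |G|², let Ĝ = Hom(G, ℂˣ) denote the character group of G, let b : Γ × Γ → ℂˣ be a nondegenerate symmetric bicharacter, and let i : Ĝ → Γ be an injective group homomorphism whose image is isotropic, i.e. b(i(χ), i(χ')) = 1 for all χ, χ' ∈ Ĝ. Then the map p̃ : Γ → Hom(Ĝ, ℂˣ) defined by p̃(x)(χ) = b(i(χ), x) is a surjective group homomorphism whose kernel is exactly i(Ĝ). Consequently, there is a short exact sequence 1 → Ĝ → Γ → G → 1, and Γ / i(Ĝ) is isomorphic to G. -/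
/-!
Nondegeneracy makes `x ↦ b(·, x)` injective, hence (by counting) an isomorphism `Γ ≃ Γ̂`, and
characters of the subgroup `i(Ĝ)` extend to `Γ`; so `p̃` maps onto the double dual of `G`, which
has `|G|` elements. Then `|ker p̃| = |Γ| / |G| = |G| = |i(Ĝ)|`, and isotropy gives
`i(Ĝ) ≤ ker p̃`, so the two agree. The first isomorphism theorem and `Ĝ̂ ≅ G` give `Γ / i(Ĝ) ≅ G`.
-/

namespace MonoidHom

variable {A B N : Type*}

def mk₂ [MulOneClass A] [Group B] [CommGroup N] (b : A → B → N)
    (hl : ∀ x y z, b (x * y) z = b x z * b y z) (hr : ∀ x y z, b x (y * z) = b x y * b x z) :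
    A →* B →* N :=
  MonoidHom.mk' (fun x => MonoidHom.mk' (b x) (hr x)) fun x y => MonoidHom.ext (hl x y)

variable (M : Type*) [CommMonoid M]

theorem bijective_of_injective_of_card_eq [Group A] [CommGroup B] [Finite B]
    [HasEnoughRootsOfUnity M (Monoid.exponent B)] (hcard : Nat.card A = Nat.card B)
    {f : A →* B →* Mˣ} (hf : Function.Injective f) : Function.Bijective f := by
  rw [Nat.bijective_iff_injective_and_card, CommGroup.card_monoidHom_of_hasEnoughRootsOfUnity]
  exact ⟨hf, hcard⟩

theorem compHom'_surjective_of_injective [Group A] [CommGroup B] [Finite B]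
    [HasEnoughRootsOfUnity M (Monoid.exponent B)] {i : A →* B} (hi : Function.Injective i) :
    Function.Surjective (i.compHom' : (B →* Mˣ) →* A →* Mˣ) := by
  intro ψ
  let e := MonoidHom.ofInjective hi
  obtain ⟨φ, hφ⟩ := domRestrict_surjective M i.range (ψ.comp e.symm.toMonoidHom)
  refine ⟨φ, MonoidHom.ext fun a => ?_⟩
  simpa [e, MonoidHom.ofInjective_apply] using DFunLike.congr_fun hφ (e a)

end MonoidHom

/-- Let `G`, `Γ` be finite abelian groups with `|Γ| = |G|²`, `b` a nondegenerate
symmetric bicharacter on `Γ`, and `i : Ĝ → Γ` an injective homomorphism with isotropic image.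
Then `p̃ : Γ → Hom(Ĝ, ℂˣ)`, `p̃(x)(χ) = b(i(χ), x)`, is surjective with kernel `i(Ĝ)`;
consequently `1 → Ĝ → Γ → G → 1` is exact and `Γ / i(Ĝ) ≅ G`. -/
theorem stmt3 {G : Type*} [CommGroup G] [Finite G] {Γ : Type*} [CommGroup Γ] [Finite Γ]
    (hcard : Nat.card Γ = Nat.card G ^ 2)
    (b : Γ → Γ → ℂˣ)
    (hb_left : ∀ x y z : Γ, b (x * y) z = b x z * b y z)
    (hb_right : ∀ x y z : Γ, b x (y * z) = b x y * b x z)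
    (hsymm : ∀ x y : Γ, b x y = b y x)
    (hnd : ∀ x : Γ, (∀ y : Γ, b x y = 1) → x = 1)
    (i : (G →* ℂˣ) →* Γ)
    (hinj : Function.Injective i)
    (hiso : ∀ χ χ' : G →* ℂˣ, b (i χ) (i χ') = 1) :
    (∀ φ : (G →* ℂˣ) →* ℂˣ, ∃ x : Γ, ∀ χ : G →* ℂˣ, b (i χ) x = φ χ) ∧
    (∀ x : Γ, (∀ χ : G →* ℂˣ, b (i χ) x = 1) ↔ x ∈ i.range) ∧
    Nonempty ((Γ ⧸ i.range) ≃* G) := by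
  let β := (MonoidHom.mk₂ b hb_left hb_right).flip
  have hβ : Function.Bijective β := by
    refine MonoidHom.bijective_of_injective_of_card_eq ℂ rfl
      ((injective_iff_map_eq_one β).mpr fun x hx => hnd x fun y => ?_)
    rw [hsymm]
    exact DFunLike.congr_fun hx y
  let p := i.compHom'.comp β
  have hp : Function.Surjective p :=
    (MonoidHom.compHom'_surjective_of_injective ℂ hinj).comp hβ.2
  have hcard_ker : Nat.card p.ker = Nat.card G := by
    have h := p.ker.card_mul_index
    rw [Subgroup.index_ker, p.range_eq_top_of_surjective hp, Subgroup.card_top,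
      Nat.card_congr (CommGroup.monoidHomMonoidHomEquiv G ℂ).toEquiv, hcard, sq] at h
    exact Nat.eq_of_mul_eq_mul_right Nat.card_pos h
  have hker : i.range = p.ker := by
    refine Subgroup.eq_of_le_of_card_ge ?_ ?_
    · rintro _ ⟨χ', rfl⟩
      exact MonoidHom.ext fun χ => hiso χ χ'
    · rw [hcard_ker, ← Nat.card_congr (MonoidHom.ofInjective hinj).toEquiv,
        CommGroup.card_monoidHom_of_hasEnoughRootsOfUnity]
  refine ⟨fun φ => (hp φ).imp fun x hx => DFunLike.congr_fun hx, fun x => ?_, ?_⟩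
  · rw [hker, MonoidHom.mem_ker, MonoidHom.ext_iff]
    rfl
  · exact ⟨(QuotientGroup.quotientMulEquivOfEq hker).trans <|
      (QuotientGroup.quotientKerEquivOfSurjective p hp).trans <|
        CommGroup.monoidHomMonoidHomEquiv G ℂ⟩
end

section
/- Let Γ be a finite abelian group (written multiplicatively) and q : Γ → ℂˣ a quadratic form, i.e. q(x⁻¹) = q(x) for all x and the map b(x,y) := q(xy) q(x)⁻¹ q(y)⁻¹ is a bicharacter; assume b is nondegenerate. Let H be a subgroup of Γ with q(h) = 1 for all h ∈ H, and set H^⊥ = { x ∈ Γ : b(x,h) = 1 for all h ∈ H }. Then: (i) H ⊆ H^⊥; (ii) q is constant on each coset xH with x ∈ H^⊥, so q induces a well-defined map q'' : H^⊥/H → ℂˣ; (iii) q'' is a quadratic form on H^⊥/H whose associated bicharacter is nondegenerate. -/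
/-!
Since `q` is trivial on `H`, so is `b` on `H × H`, and for `x ∈ H^⊥`, `h ∈ H` the identity
`q(xh) = b(x,h) q(x) q(h)` gives `q(xh) = q(x)`; hence `q` descends to `H^⊥/H`, with polar form
induced by `b`. Nondegeneracy of that form amounts to `(H^⊥)^⊥ = H`. For a nondegenerate
bicharacter every subgroup `K` satisfies `|K^⊥| |K| = |Γ|`: sum `b(x,k)` over `Γ × K` in both
orders and use that a nontrivial character sums to zero. Applied to `H` and `H^⊥` this gives
`|(H^⊥)^⊥| = |H|`, while `H ≤ (H^⊥)^⊥` by symmetry of `b`.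
-/

section MulPolar

variable {G M : Type*} [CommGroup M]

def mulPolar [Mul G] (q : G → M) (x y : G) : M := q (x * y) * (q x)⁻¹ * (q y)⁻¹

theorem mulPolar_comm [CommMagma G] (q : G → M) (x y : G) : mulPolar q x y = mulPolar q y x := by
  simp only [mulPolar, mul_comm x y, mul_right_comm _ (q x)⁻¹]

theorem map_mul_eq_of_mulPolar_eq_one [Mul G] {q : G → M} {x y : G} (hxy : mulPolar q x y = 1)
    (hy : q y = 1) : q (x * y) = q x := by
  rwa [mulPolar, hy, inv_one, mul_one, mul_inv_eq_one] at hxy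

end MulPolar

namespace QuotientGroup

variable {G M : Type*} [Group G] (N : Subgroup G)

def liftFun (f : G → M) (hf : ∀ x, ∀ n ∈ N, f (x * n) = f x) (y : G ⧸ N) : M :=
  y.liftOn' f fun a c hac => by
    rw [leftRel_apply] at hac
    simpa using (hf a _ hac).symm

end QuotientGroup

namespace MonoidHom

variable {G M : Type*} [CommGroup G] [CommGroup M] (β : G →* G →* M)

def orthogonal (K : Subgroup G) : Subgroup G where
  carrier := {x | ∀ k ∈ K, β x k = 1}
  one_mem' := by simp
  mul_mem' hx hy k hk := by simp [hx k hk, hy k hk]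
  inv_mem' hx k hk := by simp [hx k hk]

variable {β} in
theorem mem_orthogonal {K : Subgroup G} {x : G} : x ∈ β.orthogonal K ↔ ∀ k ∈ K, β x k = 1 :=
  Iff.rfl

theorem le_orthogonal_orthogonal (hβ : ∀ x y, β x y = β y x) (K : Subgroup G) :
    K ≤ β.orthogonal (β.orthogonal K) := fun k hk _ hx => (hβ _ _).trans (hx k hk)

theorem card_orthogonal_mul_card [Finite G] {R : Type*} [CommRing R] [IsDomain R] [CharZero R]
    (β : G →* G →* Rˣ) (hβ : ∀ y, (∀ x, β x y = 1) → y = 1) (K : Subgroup G) :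
    Nat.card (β.orthogonal K) * Nat.card K = Nat.card G := by
  classical
  have := Fintype.ofFinite G
  have hrow (x : G) : (Units.coeHom R).comp ((β x).comp K.subtype) = 1 ↔ x ∈ β.orthogonal K := by
    simp [DFunLike.ext_iff, mem_orthogonal]
  have hcol (y : G) : (Units.coeHom R).comp (β.flip y) = 1 ↔ y = 1 := by
    refine ⟨fun h => hβ y fun x => ?_, fun h => by simp [h]⟩
    simpa using DFunLike.congr_fun h x
  have hrow_sum (x : G) :
      ∑ k : K, (β x k : R) = if x ∈ β.orthogonal K then (Nat.card K : R) else 0 := by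
    simpa [hrow, Nat.card_eq_fintype_card] using
      sum_hom_units ((Units.coeHom R).comp ((β x).comp K.subtype))
  have hcol_sum (k : K) : ∑ x : G, (β x k : R) = if k = 1 then (Nat.card G : R) else 0 := by
    simpa [hcol, Nat.card_eq_fintype_card] using sum_hom_units ((Units.coeHom R).comp (β.flip k))
  have hcount : (Nat.card (β.orthogonal K) * Nat.card K : R) = Nat.card G := calc
    _ = ∑ x : G, ∑ k : K, (β x k : R) := by
      simp [hrow_sum, Finset.sum_ite, Nat.card_eq_fintype_card, Fintype.card_subtype]
    _ = ∑ k : K, ∑ x : G, (β x k : R) := Finset.sum_comm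
    _ = Nat.card G := by simp [hcol_sum]
  exact_mod_cast hcount

theorem orthogonal_orthogonal [Finite G] {R : Type*} [CommRing R] [IsDomain R] [CharZero R]
    (β : G →* G →* Rˣ) (hβ : ∀ x y, β x y = β y x) (hnd : ∀ x, (∀ y, β x y = 1) → x = 1)
    (K : Subgroup G) : β.orthogonal (β.orthogonal K) = K := by
  have hβ' : ∀ y, (∀ x, β x y = 1) → y = 1 := fun y h => hnd y fun x => (hβ y x).trans (h x)
  have hcard : Nat.card (β.orthogonal (β.orthogonal K)) = Nat.card K :=
    Nat.eq_of_mul_eq_mul_right Nat.card_pos <| (card_orthogonal_mul_card β hβ' _).trans <|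
      (card_orthogonal_mul_card β hβ' K).symm.trans (mul_comm _ _)
  exact (Subgroup.eq_of_le_of_card_ge (le_orthogonal_orthogonal β hβ K) hcard.le).symm

end MonoidHom

/-- Let `q` be a quadratic form on a finite abelian group `Γ` with nondegenerate
associated bicharacter `b(x,y) = q(xy)q(x)⁻¹q(y)⁻¹`, and let `H ≤ Γ` with `q|_H = 1`.
Then (i) `H ⊆ H^⊥`; (ii) `q` is constant on cosets `xH` for `x ∈ H^⊥`; (iii) `q` induces a
quadratic form `q''` on `H^⊥/H` whose associated bicharacter is nondegenerate. -/
theorem stmt4 {Γ : Type*} [CommGroup Γ] [Fintype Γ]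
    (q : Γ → ℂˣ) (hqinv : ∀ x : Γ, q x⁻¹ = q x)
    (b : Γ → Γ → ℂˣ) (hb : ∀ x y : Γ, b x y = q (x * y) * (q x)⁻¹ * (q y)⁻¹)
    (hb_left : ∀ x y z : Γ, b (x * y) z = b x z * b y z)
    (hb_right : ∀ x y z : Γ, b x (y * z) = b x y * b x z)
    (hnd : ∀ x : Γ, (∀ y : Γ, b x y = 1) → x = 1)
    (H : Subgroup Γ) (hH : ∀ h ∈ H, q h = 1)
    (Hperp : Subgroup Γ) (hHperp : (Hperp : Set Γ) = {x : Γ | ∀ h ∈ H, b x h = 1}) :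
    H ≤ Hperp ∧
    (∀ x ∈ Hperp, ∀ h ∈ H, q (x * h) = q x) ∧
    (∃ q'' : (Hperp ⧸ H.subgroupOf Hperp) → ℂˣ,
      (∀ x : Hperp, q'' (QuotientGroup.mk x) = q (x : Γ)) ∧
      (∀ y : Hperp ⧸ H.subgroupOf Hperp, q'' y⁻¹ = q'' y) ∧
      (∀ y z w : Hperp ⧸ H.subgroupOf Hperp,
        q'' ((y * z) * w) * (q'' (y * z))⁻¹ * (q'' w)⁻¹ =
          (q'' (y * w) * (q'' y)⁻¹ * (q'' w)⁻¹) * (q'' (z * w) * (q'' z)⁻¹ * (q'' w)⁻¹)) ∧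
      (∀ y z w : Hperp ⧸ H.subgroupOf Hperp,
        q'' (y * (z * w)) * (q'' y)⁻¹ * (q'' (z * w))⁻¹ =
          (q'' (y * z) * (q'' y)⁻¹ * (q'' z)⁻¹) * (q'' (y * w) * (q'' y)⁻¹ * (q'' w)⁻¹)) ∧
      (∀ y : Hperp ⧸ H.subgroupOf Hperp,
        (∀ z : Hperp ⧸ H.subgroupOf Hperp, q'' (y * z) * (q'' y)⁻¹ * (q'' z)⁻¹ = 1) → y = 1)) := by
  obtain rfl : b = mulPolar q := funext fun x => funext (hb x)
  let β : Γ →* Γ →* ℂˣ :=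
    .mk' (fun x => .mk' (mulPolar q x) (hb_right x)) fun x y => MonoidHom.ext (hb_left x y)
  obtain rfl : Hperp = β.orthogonal H := SetLike.coe_injective hHperp
  have hH_le : H ≤ β.orthogonal H := fun h hh k hk => by
    simp [β, mulPolar, hH h hh, hH k hk, hH _ (H.mul_mem hh hk)]
  have hq_mul : ∀ x ∈ β.orthogonal H, ∀ h ∈ H, q (x * h) = q x := fun x hx h hh =>
    map_mul_eq_of_mulPolar_eq_one (hx h hh) (hH h hh)
  -- On representatives `q''` and its polar form unfold to `q` and `mulPolar q = β`.
  refine ⟨hH_le, hq_mul,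
    QuotientGroup.liftFun _ (fun x : β.orthogonal H => q x) (fun x n hn => hq_mul x x.2 n hn),
    fun x => rfl, ?_, ?_, ?_, ?_⟩
  · rintro ⟨x⟩
    exact hqinv x
  · rintro ⟨x⟩ ⟨y⟩ ⟨z⟩
    exact hb_left x y z
  · rintro ⟨x⟩ ⟨y⟩ ⟨z⟩
    exact hb_right x y z
  · intro y hy
    induction y using QuotientGroup.induction_on with | H x => ?_
    have hx : (x : Γ) ∈ β.orthogonal (β.orthogonal H) := fun z hz => hy (QuotientGroup.mk ⟨z, hz⟩)
    rw [MonoidHom.orthogonal_orthogonal β (mulPolar_comm q) hnd] at hx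
    exact (QuotientGroup.eq_one_iff x).mpr hx
end
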